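/- Let G be a (C4, diamond)-free graph with no clique cutset, let w be a weight function on G with w(G) = 1, and let c ∈ [1/2, 1). Let S be a smooth collection of separations of G, let β be the central bag for S (the intersection over S ∈ S of B(S) ∪ C(S)), and let w_S be the inherited weight function on β. If X ⊆ β is a (w_S, c)-balanced separator of β, then Y = X ∪ (N[X ∩ v(S)] ∩ β) is a (w, c)-balanced separator of G. -/

import Mathlib

open SimpleGraph Set

namespace Paper

variable {V : Type} {W : Type}

/-- X and Y are anticomplete: no edge between them. -/
def Anticomplete (G : SimpleGraph V) (X Y : Set V) : Prop :=
  ∀ x ∈ X, ∀ y ∈ Y, ¬ G.Adj x y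

/-- Closed neighborhood N[v]. -/
def closedNbr (G : SimpleGraph V) (v : V) : Set V := insert v (G.neighborSet v)

/-- Open neighborhood N(X) of a set of vertices. -/
def setNbr (G : SimpleGraph V) (X : Set V) : Set V :=
  {v | v ∉ X ∧ ∃ x ∈ X, G.Adj x v}

/-- Closed neighborhood N[X] of a set of vertices. -/
def closedNbrSet (G : SimpleGraph V) (X : Set V) : Set V := X ∪ setNbr G X

/-- D is a connected component of the subgraph of G induced on S. -/
def IsComponentOf (G : SimpleGraph V) (S D : Set V) : Prop :=
  D.Nonempty ∧ D ⊆ S ∧ (G.induce D).Connected ∧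
    ∀ D' : Set V, D ⊆ D' → D' ⊆ S → (G.induce D').Connected → D' = D

/-- G contains no induced copy of H. -/
def HFree (G : SimpleGraph V) (H : SimpleGraph W) : Prop :=
  ∀ s : Set V, ¬ Nonempty ((G.induce s) ≃g H)

/-- The diamond: K₄ minus the edge 01. -/
def diamond : SimpleGraph (Fin 4) :=
  SimpleGraph.fromRel (fun x y => s(x, y) ≠ s(0, 1))

/-- H is a hole of G: an induced cycle of length at least 4. -/
def IsHole (G : SimpleGraph V) (H : Set V) : Prop :=
  ∃ n, 4 ≤ n ∧ Nonempty ((G.induce H) ≃g cycleGraph n)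

/-- H is an even hole of G. -/
def IsEvenHole (G : SimpleGraph V) (H : Set V) : Prop :=
  ∃ n, 4 ≤ n ∧ Even n ∧ Nonempty ((G.induce H) ≃g cycleGraph n)

/-- (H, w) is a wheel: a hole plus a vertex with ≥ 3 pairwise non-adjacent neighbors in H. -/
def IsWheel (G : SimpleGraph V) (H : Set V) (w : V) : Prop :=
  IsHole G H ∧ ∃ x y z, x ∈ H ∩ G.neighborSet w ∧ y ∈ H ∩ G.neighborSet w ∧
    z ∈ H ∩ G.neighborSet w ∧ x ≠ y ∧ x ≠ z ∧ y ≠ z ∧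
    ¬ G.Adj x y ∧ ¬ G.Adj x z ∧ ¬ G.Adj y z

/-- (H, v) is a line wheel: N(v) ∩ H is a union of two disjoint edges. -/
def IsLineWheel (G : SimpleGraph V) (H : Set V) (v : V) : Prop :=
  IsHole G H ∧ v ∉ H ∧ ∃ a b c d : V,
    a ≠ b ∧ a ≠ c ∧ a ≠ d ∧ b ≠ c ∧ b ≠ d ∧ c ≠ d ∧
    G.neighborSet v ∩ H = {a, b, c, d} ∧
    G.Adj a b ∧ G.Adj c d ∧ ¬ G.Adj a c ∧ ¬ G.Adj a d ∧ ¬ G.Adj b c ∧ ¬ G.Adj b d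

/-- An even wheel: a line wheel, or a wheel with an even number of neighbors in the hole,
not forming a path of length one. -/
def IsEvenWheel (G : SimpleGraph V) (H : Set V) (v : V) : Prop :=
  IsLineWheel G H v ∨
    (IsWheel G H v ∧ Even ((G.neighborSet v ∩ H).ncard) ∧
      ¬ ∃ a b, a ≠ b ∧ G.Adj a b ∧ G.neighborSet v ∩ H = {a, b})

/-- The set of vertices of a walk. -/
def suppSet (G : SimpleGraph V) {a b : V} (p : G.Walk a b) : Set V :=
  {v | v ∈ p.support}

/-- A walk is induced: the only adjacencies among its vertices are its own edges. -/
def InducedWalk (G : SimpleGraph V) {a b : V} (p : G.Walk a b) : Prop :=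
  ∀ u v, u ∈ p.support → v ∈ p.support → G.Adj u v → s(u, v) ∈ p.edges

/-- The interior of a walk: its vertices except the two endpoints. -/
def wInterior (G : SimpleGraph V) {a b : V} (p : G.Walk a b) : Set V :=
  {v | v ∈ p.support ∧ v ≠ a ∧ v ≠ b}

/-- G contains a theta as an induced subgraph. -/
def ContainsTheta (G : SimpleGraph V) : Prop :=
  ∃ (a b : V) (p₁ p₂ p₃ : G.Walk a b),
    ¬ G.Adj a b ∧
    p₁.IsPath ∧ p₂.IsPath ∧ p₃.IsPath ∧
    InducedWalk G p₁ ∧ InducedWalk G p₂ ∧ InducedWalk G p₃ ∧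
    2 ≤ p₁.length ∧ 2 ≤ p₂.length ∧ 2 ≤ p₃.length ∧
    Disjoint (wInterior G p₁) (wInterior G p₂) ∧
    Disjoint (wInterior G p₁) (wInterior G p₃) ∧
    Disjoint (wInterior G p₂) (wInterior G p₃) ∧
    Anticomplete G (wInterior G p₁) (wInterior G p₂) ∧
    Anticomplete G (wInterior G p₁) (wInterior G p₃) ∧
    Anticomplete G (wInterior G p₂) (wInterior G p₃)

/-- G contains a pyramid as an induced subgraph. -/
def ContainsPyramid (G : SimpleGraph V) : Prop :=
  ∃ (a b₁ b₂ b₃ : V) (p₁ : G.Walk a b₁) (p₂ : G.Walk a b₂) (p₃ : G.Walk a b₃),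
    G.Adj b₁ b₂ ∧ G.Adj b₁ b₃ ∧ G.Adj b₂ b₃ ∧
    p₁.IsPath ∧ p₂.IsPath ∧ p₃.IsPath ∧
    InducedWalk G p₁ ∧ InducedWalk G p₂ ∧ InducedWalk G p₃ ∧
    1 ≤ p₁.length ∧ 1 ≤ p₂.length ∧ 1 ≤ p₃.length ∧
    ((2 ≤ p₁.length ∧ 2 ≤ p₂.length) ∨ (2 ≤ p₁.length ∧ 2 ≤ p₃.length) ∨
      (2 ≤ p₂.length ∧ 2 ≤ p₃.length)) ∧
    Disjoint (suppSet G p₁ \ {a}) (suppSet G p₂ \ {a}) ∧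
    Disjoint (suppSet G p₁ \ {a}) (suppSet G p₃ \ {a}) ∧
    Disjoint (suppSet G p₂ \ {a}) (suppSet G p₃ \ {a}) ∧
    (∀ u v, u ∈ suppSet G p₁ \ {a} → v ∈ suppSet G p₂ \ {a} → G.Adj u v →
      u = b₁ ∧ v = b₂) ∧
    (∀ u v, u ∈ suppSet G p₁ \ {a} → v ∈ suppSet G p₃ \ {a} → G.Adj u v →
      u = b₁ ∧ v = b₃) ∧
    (∀ u v, u ∈ suppSet G p₂ \ {a} → v ∈ suppSet G p₃ \ {a} → G.Adj u v →
      u = b₂ ∧ v = b₃)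

/-- G contains a prism as an induced subgraph. -/
def ContainsPrism (G : SimpleGraph V) : Prop :=
  ∃ (a₁ a₂ a₃ b₁ b₂ b₃ : V) (p₁ : G.Walk a₁ b₁) (p₂ : G.Walk a₂ b₂) (p₃ : G.Walk a₃ b₃),
    G.Adj a₁ a₂ ∧ G.Adj a₁ a₃ ∧ G.Adj a₂ a₃ ∧
    G.Adj b₁ b₂ ∧ G.Adj b₁ b₃ ∧ G.Adj b₂ b₃ ∧
    p₁.IsPath ∧ p₂.IsPath ∧ p₃.IsPath ∧
    InducedWalk G p₁ ∧ InducedWalk G p₂ ∧ InducedWalk G p₃ ∧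
    Disjoint (suppSet G p₁) (suppSet G p₂) ∧
    Disjoint (suppSet G p₁) (suppSet G p₃) ∧
    Disjoint (suppSet G p₂) (suppSet G p₃) ∧
    (∀ u v, u ∈ suppSet G p₁ → v ∈ suppSet G p₂ → G.Adj u v →
      s(u, v) = s(a₁, a₂) ∨ s(u, v) = s(b₁, b₂)) ∧
    (∀ u v, u ∈ suppSet G p₁ → v ∈ suppSet G p₃ → G.Adj u v →
      s(u, v) = s(a₁, a₃) ∨ s(u, v) = s(b₁, b₃)) ∧
    (∀ u v, u ∈ suppSet G p₂ → v ∈ suppSet G p₃ → G.Adj u v →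
      s(u, v) = s(a₂, a₃) ∨ s(u, v) = s(b₂, b₃))

/-- G has a clique cutset. -/
def HasCliqueCutset (G : SimpleGraph V) : Prop :=
  ∃ C : Set V, G.IsClique C ∧ ¬ (G.induce Cᶜ).Preconnected

/-- (A, C, B) is a separation of G. -/
def IsSeparation (G : SimpleGraph V) (A C B : Set V) : Prop :=
  A ∪ C ∪ B = Set.univ ∧ Disjoint A C ∧ Disjoint A B ∧ Disjoint C B ∧
    Anticomplete G A B

/-- The weight of a set of vertices. -/
noncomputable def fweight (w : V → ℝ) (X : Set V) : ℝ := ∑ᶠ x ∈ X, w x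

/-- X is a (w, c)-balanced separator of G. -/
def IsBalSep (G : SimpleGraph V) (w : V → ℝ) (c : ℝ) (X : Set V) : Prop :=
  ∀ D, IsComponentOf G Xᶜ D → fweight w D ≤ c

/-- The treewidth of G is at most k. -/
def TreewidthLE (G : SimpleGraph V) (k : ℕ) : Prop :=
  ∃ (T : Type) (tG : SimpleGraph T) (χ : T → Set V),
    tG.IsTree ∧
    (∀ v, ∃ t, v ∈ χ t) ∧
    (∀ u v, G.Adj u v → ∃ t, u ∈ χ t ∧ v ∈ χ t) ∧
    (∀ v, (tG.induce {t | v ∈ χ t}).Connected) ∧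
    ∀ t, (χ t).ncard ≤ k + 1

/-- The Ramsey number R(t, s). -/
noncomputable def ramsey (t s : ℕ) : ℕ :=
  sInf {n | ∀ G : SimpleGraph (Fin n), ¬ G.CliqueFree t ∨ ¬ Gᶜ.CliqueFree s}

/-- (H, v) is a twin wheel: N(v) ∩ H is a path of length two. -/
def IsTwinWheel (G : SimpleGraph V) (H : Set V) (v : V) : Prop :=
  IsHole G H ∧ ∃ a b c : V, a ≠ b ∧ a ≠ c ∧ b ≠ c ∧
    G.neighborSet v ∩ H = {a, b, c} ∧ G.Adj a b ∧ G.Adj b c ∧ ¬ G.Adj a c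

/-- (H, v) is a short pyramid: v has exactly three neighbors in H, exactly two adjacent. -/
def IsShortPyramid (G : SimpleGraph V) (H : Set V) (v : V) : Prop :=
  IsHole G H ∧ ∃ a b c : V, a ≠ b ∧ a ≠ c ∧ b ≠ c ∧
    G.neighborSet v ∩ H = {a, b, c} ∧ G.Adj a b ∧ ¬ G.Adj a c ∧ ¬ G.Adj b c

/-- A proper wheel: a wheel that is neither a twin wheel nor a short pyramid. -/
def IsProperWheel (G : SimpleGraph V) (H : Set V) (v : V) : Prop :=
  IsWheel G H v ∧ ¬ IsTwinWheel G H v ∧ ¬ IsShortPyramid G H v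

/-- A universal wheel: v is complete to H. -/
def IsUniversalWheel (G : SimpleGraph V) (H : Set V) (v : V) : Prop :=
  IsWheel G H v ∧ H ⊆ G.neighborSet v

/-!
Let `Y = X ∪ (N[X ∩ v(S)] ∩ β)` and let `D` be a component of `G - Y`. If `D` misses `β`, it
is a component of `⋃ A(S)`, so by non-crossing it lies inside a single `A(S)` and weighs at
most `1/2`. Otherwise `D` meets a component `D'` of `β - X`. Walking through `D` from `D'`, every
component of `⋃ A(S)` that is entered is attached to `D'` through some `C(f(v)) ⊆ N[v]`, and
`v ∉ X` since otherwise `N[v] ∩ β ⊆ Y`; so `v ∈ D'`. Hence `D` is covered by `D'` and the sets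
`A*(f(v))` with `v ∈ D'`, whence `w(D) ≤ w_S(D') ≤ c`.
-/

section Components

variable {G : SimpleGraph V} {S T D K : Set V}

lemma induce_connected_induction (hK : (G.induce K).Connected) (P : V → Prop) {u : V}
    (hu : u ∈ K) (hPu : P u)
    (hstep : ∀ a b, a ∈ K → b ∈ K → G.Adj a b → P a → P b) :
    ∀ v ∈ K, P v := by
  have key : ∀ {a b : K}, (G.induce K).Walk a b → P a → P b := by
    intro a b p
    induction p with
    | nil => exact id
    | cons h _ ih => exact fun hPa => ih (hstep _ _ (Subtype.prop _) (Subtype.prop _) h hPa)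
  intro v hv
  exact key (hK.preconnected ⟨u, hu⟩ ⟨v, hv⟩).some hPu

lemma IsComponentOf.subset (hD : IsComponentOf G S D) : D ⊆ S := hD.2.1

lemma IsComponentOf.connected (hD : IsComponentOf G S D) : (G.induce D).Connected := hD.2.2.1

lemma IsComponentOf.of_subset (hD : IsComponentOf G S D) (hDT : D ⊆ T) (hTS : T ⊆ S) :
    IsComponentOf G T D :=
  ⟨hD.1, hDT, hD.connected, fun D' h₁ h₂ h₃ => hD.2.2.2 D' h₁ (h₂.trans hTS) h₃⟩

lemma IsComponentOf.subset_of_connected (hD : IsComponentOf G S D)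
    (hK : (G.induce K).Connected) (hKS : K ⊆ S) (hDK : (D ∩ K).Nonempty) : K ⊆ D := by
  rw [← hD.2.2.2 (D ∪ K) subset_union_left (union_subset hD.subset hKS)
    (induce_union_connected hD.connected.preconnected hK.preconnected hDK)]
  exact subset_union_right

lemma IsComponentOf.mem_of_adj (hD : IsComponentOf G S D) {x y : V} (hx : x ∈ D) (hy : y ∈ S)
    (hxy : G.Adj x y) : y ∈ D :=
  hD.subset_of_connected (induce_pair_connected_of_adj hxy) (pair_subset (hD.subset hx) hy)
    ⟨x, hx, mem_insert x _⟩ (mem_insert_of_mem x rfl)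

lemma exists_isComponentOf_superset [Finite V] (hK : (G.induce K).Connected) (hKS : K ⊆ S) :
    ∃ D, IsComponentOf G S D ∧ K ⊆ D := by
  obtain ⟨D, ⟨hKD, hDS, hD⟩, hmax⟩ :=
    (toFinite {E | K ⊆ E ∧ E ⊆ S ∧ (G.induce E).Connected}).exists_maximal
      ⟨K, subset_rfl, hKS, hK⟩
  obtain ⟨x, hx⟩ := nonempty_coe_sort.mp hK.nonempty
  exact ⟨D, ⟨⟨x, hKD hx⟩, hDS, hD, fun D' h₁ h₂ h₃ =>
    (hmax ⟨hKD.trans h₁, h₂, h₃⟩ h₁).antisymm h₁⟩, hKD⟩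

lemma exists_isComponentOf_mem [Finite V] {x : V} (hx : x ∈ S) :
    ∃ D, IsComponentOf G S D ∧ x ∈ D := by
  obtain ⟨D, hD, hxD⟩ := exists_isComponentOf_superset (K := {x}) (by simp)
    (singleton_subset_iff.mpr hx)
  exact ⟨D, hD, hxD rfl⟩

lemma mem_closedNbr_comm {u v : V} : u ∈ closedNbr G v ↔ v ∈ closedNbr G u := by
  simp [closedNbr, eq_comm, G.adj_comm]

lemma IsComponentOf.mem_of_mem_closedNbr (hD : IsComponentOf G S D) {u v : V} (hv : v ∈ D)
    (hu : u ∈ closedNbr G v) (huS : u ∈ S) : u ∈ D := by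
  rcases hu with rfl | hadj
  · exact hv
  · exact hD.mem_of_adj hv huS hadj

lemma closedNbr_subset_closedNbrSet {v : V} (hv : v ∈ T) :
    closedNbr G v ⊆ closedNbrSet G T := by
  rintro u (rfl | hadj)
  · exact Or.inl hv
  · by_cases hu : u ∈ T
    exacts [Or.inl hu, Or.inr ⟨hu, v, hv, hadj⟩]

end Components

section Separations

variable {G : SimpleGraph V} {A C B : Set V}

lemma IsSeparation.eq_compl_union (h : IsSeparation G A C B) : A = (B ∪ C)ᶜ := by
  obtain ⟨hcover, hAC, hAB, -, -⟩ := h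
  ext x
  have hx : x ∈ A ∪ C ∪ B := hcover ▸ mem_univ x
  have hxC : x ∈ A → x ∉ C := fun h => disjoint_left.mp hAC h
  have hxB : x ∈ A → x ∉ B := fun h => disjoint_left.mp hAB h
  simp only [mem_union, mem_compl_iff] at hx ⊢
  tauto

lemma IsSeparation.mem_of_adj (h : IsSeparation G A C B) {x y : V} (hx : x ∈ A) (hy : y ∉ A)
    (hxy : G.Adj x y) : y ∈ C := by
  have hy' : y ∈ A ∪ C ∪ B := h.1 ▸ mem_univ y
  rcases hy' with (hyA | hyC) | hyB
  exacts [absurd hyA hy, hyC, absurd hxy (h.2.2.2.2 x hx y hyB)]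

lemma compl_iInter_union_eq_iUnion {ι : Type*} {A C B : ι → Set V}
    (hsep : ∀ i, IsSeparation G (A i) (C i) (B i)) : (⋂ i, (B i ∪ C i))ᶜ = ⋃ i, A i := by
  simp_rw [compl_iInter, (hsep _).eq_compl_union]

end Separations

section NearlyNonCrossing

variable {ι : Type*} {G : SimpleGraph V} {A : ι → Set V} {D K : Set V}

def PairwiseNearlyNonCrossing (G : SimpleGraph V) (A : ι → Set V) : Prop :=
  ∀ i j, i ≠ j → ∀ D, IsComponentOf G (A i ∪ A j) D →
    IsComponentOf G (A i) D ∨ IsComponentOf G (A j) D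

lemma PairwiseNearlyNonCrossing.exists_connected_superset [Finite V]
    (hnc : PairwiseNearlyNonCrossing G A) {j l : ι} (hK : (G.induce K).Connected)
    (hKA : K ⊆ A j ∪ A l) : ∃ m H, K ⊆ H ∧ H ⊆ A m ∧ (G.induce H).Connected := by
  by_cases hjl : j = l
  · subst hjl
    exact ⟨j, K, subset_rfl, by simpa using hKA, hK⟩
  obtain ⟨H, hH, hKH⟩ := exists_isComponentOf_superset hK hKA
  rcases hnc j l hjl H hH with h | h
  exacts [⟨j, H, hKH, h.subset, h.connected⟩, ⟨l, H, hKH, h.subset, h.connected⟩]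

/-- A maximal connected subset of `D` inside a single `A i` absorbs every neighbour in `D`:
glue the neighbour on and use non-crossing to push the result back into a single `A m`. -/
lemma PairwiseNearlyNonCrossing.exists_subset_of_isComponentOf [Finite V]
    (hnc : PairwiseNearlyNonCrossing G A) (hD : IsComponentOf G (⋃ i, A i) D) :
    ∃ i, D ⊆ A i := by
  obtain ⟨x, hx⟩ := hD.1
  obtain ⟨j, hxj⟩ := mem_iUnion.mp (hD.subset hx)
  obtain ⟨E, ⟨hED, hE, i, hEi⟩, hmax⟩ :=
    (toFinite {E | E ⊆ D ∧ (G.induce E).Connected ∧ ∃ i, E ⊆ A i}).exists_maximal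
      ⟨{x}, singleton_subset_iff.mpr hx, by simp, j, singleton_subset_iff.mpr hxj⟩
  obtain ⟨u, hu⟩ := nonempty_coe_sort.mp hE.nonempty
  refine ⟨i, fun v hv => hEi ?_⟩
  refine induce_connected_induction hD.connected (· ∈ E) (hED hu) hu ?_ v hv
  intro a b haD hbD hab ha
  obtain ⟨l, hbl⟩ := mem_iUnion.mp (hD.subset hbD)
  have hK : (G.induce (E ∪ {a, b})).Connected := induce_union_connected hE.preconnected
    (induce_pair_connected_of_adj hab).preconnected ⟨a, ha, mem_insert a _⟩
  obtain ⟨m, H, hKH, hHm, hH⟩ := hnc.exists_connected_superset hK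
    (union_subset (hEi.trans subset_union_left) (pair_subset (Or.inl (hEi ha)) (Or.inr hbl)))
  have hHD : H ⊆ D := hD.subset_of_connected hH (hHm.trans (subset_iUnion A m))
    ⟨a, haD, hKH (Or.inl ha)⟩
  exact hmax ⟨hHD, hH, m, hHm⟩ (subset_union_left.trans hKH)
    (hKH (Or.inr (mem_insert_of_mem a rfl)))

end NearlyNonCrossing

section Weights

variable {ι : Type*} {w : V → ℝ} {S T : Set V}

lemma fweight_nonneg (hw : ∀ v, 0 ≤ w v) : 0 ≤ fweight w S :=
  finsum_nonneg fun x => finsum_nonneg fun _ => hw x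

variable [Finite V]

lemma fweight_union (h : Disjoint S T) : fweight w (S ∪ T) = fweight w S + fweight w T :=
  finsum_mem_union h S.toFinite T.toFinite

lemma fweight_mono (hw : ∀ v, 0 ≤ w v) (h : S ⊆ T) : fweight w S ≤ fweight w T :=
  calc fweight w S ≤ fweight w S + fweight w (T \ S) :=
        le_add_of_nonneg_right (fweight_nonneg hw)
    _ = fweight w T := by rw [← fweight_union disjoint_sdiff_right, union_sdiff_cancel h]

lemma fweight_union_le (hw : ∀ v, 0 ≤ w v) :
    fweight w (S ∪ T) ≤ fweight w S + fweight w T :=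
  calc fweight w (S ∪ T) = fweight w S + fweight w (T \ S) := by
        rw [← fweight_union disjoint_sdiff_right, union_sdiff_self]
    _ ≤ fweight w S + fweight w T := add_le_add le_rfl (fweight_mono hw sdiff_subset)

lemma fweight_biUnion_le (hw : ∀ v, 0 ≤ w v) (s : ι → Set V) {I : Set ι} (hI : I.Finite) :
    fweight w (⋃ i ∈ I, s i) ≤ ∑ᶠ i ∈ I, fweight w (s i) := by
  induction I, hI using Set.Finite.induction_on with
  | empty => simp [fweight]
  | @insert a I haI hI ih =>
    rw [biUnion_insert, finsum_mem_insert _ haI hI]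
    exact (fweight_union_le hw).trans (add_le_add le_rfl ih)

lemma fweight_eq_add_finsum_preimage {vtx : ι → V} (hinj : Function.Injective vtx)
    {wS : V → ℝ} (f : ι → ℝ) (h₁ : ∀ i, wS (vtx i) = w (vtx i) + f i)
    (h₂ : ∀ u, u ∉ range vtx → wS u = w u) (S : Set V) :
    fweight wS S = fweight w S + ∑ᶠ i ∈ vtx ⁻¹' S, f i := by
  have hdiff : ∑ᶠ x ∈ S, (wS x - w x) = ∑ᶠ i ∈ vtx ⁻¹' S, f i :=
    calc ∑ᶠ x ∈ S, (wS x - w x) = ∑ᶠ x ∈ vtx '' (vtx ⁻¹' S), (wS x - w x) := by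
          refine finsum_mem_inter_support_eq' _ _ _ fun x hx => ?_
          have hx : x ∈ range vtx := by_contra fun h => hx (by simp [h₂ x h])
          rw [image_preimage_eq_inter_range]
          exact ⟨fun h => ⟨h, hx⟩, And.left⟩
      _ = ∑ᶠ i ∈ vtx ⁻¹' S, (wS (vtx i) - w (vtx i)) := finsum_mem_image hinj.injOn
      _ = ∑ᶠ i ∈ vtx ⁻¹' S, f i := finsum_mem_congr rfl fun i _ => by rw [h₁]; ring
  rw [fweight, fweight, ← hdiff, ← finsum_mem_add_distrib S.toFinite]
  simp only [add_sub_cancel]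

end Weights

section CentralBag

variable {ι : Type*} {G : SimpleGraph V} {A : ι → Set V} {D₀ : Set V}

/-- The set `A*(f(v_i))` of the paper. -/
def starPart [LT ι] (G : SimpleGraph V) (A : ι → Set V) (i : ι) : Set V :=
  ⋃₀ {D | IsComponentOf G (⋃ j, A j) D ∧ D ⊆ A i ∧ ∀ j, j < i → ¬ D ⊆ A j}

lemma exists_subset_starPart [LinearOrder ι] [WellFoundedLT ι]
    (hD₀ : IsComponentOf G (⋃ j, A j) D₀) {i : ι} (hi : D₀ ⊆ A i) :
    ∃ i, D₀ ⊆ A i ∧ D₀ ⊆ starPart G A i := by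
  obtain ⟨i₀, hi₀, hmin⟩ := wellFounded_lt.has_min {i | D₀ ⊆ A i} ⟨i, hi⟩
  exact ⟨i₀, hi₀, subset_sUnion_of_mem ⟨hD₀, hi₀, fun j hj hjA => hmin j hjA hj⟩⟩

variable [Finite V] {C B : ι → Set V} {vtx : ι → V} {β X Y K D D' : Set V}

lemma mem_or_mem_component_with_centres_mem
    (hsep : ∀ i, IsSeparation G (A i) (C i) (B i)) (hC : ∀ i, C i ⊆ closedNbr G (vtx i))
    (hvβ : ∀ i, vtx i ∈ β) (hβ : βᶜ = ⋃ i, A i)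
    (hown : ∀ D₀, IsComponentOf G (⋃ i, A i) D₀ → ∃ i, D₀ ⊆ A i)
    (hXY : X ⊆ Y) (hY : ∀ i, vtx i ∈ X → closedNbr G (vtx i) ∩ β ⊆ Y)
    (hK : (G.induce K).Connected) (hKY : K ⊆ Yᶜ) (hD' : IsComponentOf G (β \ X) D')
    {u : V} (huK : u ∈ K) (huD' : u ∈ D') :
    ∀ x ∈ K, x ∈ D' ∨ ∃ D₀, IsComponentOf G (⋃ i, A i) D₀ ∧ x ∈ D₀ ∧
      ∀ i, D₀ ⊆ A i → vtx i ∈ D' := by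
  have hU : ∀ {x}, x ∉ β → x ∈ ⋃ i, A i := fun hx => hβ ▸ hx
  have hnotA : ∀ {x} i, x ∈ β → x ∉ A i := fun {x} i hx hxA =>
    (hβ ▸ mem_iUnion_of_mem i hxA : x ∈ βᶜ) hx
  have hcentre : ∀ i {p}, p ∈ D' → p ∈ K → p ∈ closedNbr G (vtx i) → vtx i ∈ D' :=
    fun i p hpD' hpK hpv => hD'.mem_of_mem_closedNbr hpD' (mem_closedNbr_comm.mp hpv)
      ⟨hvβ i, fun hvX => hKY hpK (hY i hvX ⟨hpv, (hD'.subset hpD').1⟩)⟩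
  refine induce_connected_induction hK _ huK (Or.inl huD') ?_
  intro a b haK hbK hab ha
  have hbX : b ∉ X := fun h => hKY hbK (hXY h)
  by_cases hbβ : b ∈ β
  · left
    rcases ha with haD' | ⟨D₀, hD₀, haD₀, hcentres⟩
    · exact hD'.mem_of_adj haD' ⟨hbβ, hbX⟩ hab
    · obtain ⟨i, hi⟩ := hown D₀ hD₀
      have hbC : b ∈ C i := (hsep i).mem_of_adj (hi haD₀) (hnotA i hbβ) hab
      exact hD'.mem_of_mem_closedNbr (hcentres i hi) (hC i hbC) ⟨hbβ, hbX⟩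
  · right
    rcases ha with haD' | ⟨D₀, hD₀, haD₀, hcentres⟩
    · obtain ⟨D₀, hD₀, hbD₀⟩ := exists_isComponentOf_mem (G := G) (hU hbβ)
      refine ⟨D₀, hD₀, hbD₀, fun i hi => hcentre i haD' haK (hC i ?_)⟩
      exact (hsep i).mem_of_adj (hi hbD₀) (hnotA i (hD'.subset haD').1) hab.symm
    · exact ⟨D₀, hD₀, hD₀.mem_of_adj haD₀ (hU hbβ) hab, hcentres⟩

lemma subset_union_biUnion_starPart [LinearOrder ι] [WellFoundedLT ι]
    (hsep : ∀ i, IsSeparation G (A i) (C i) (B i)) (hC : ∀ i, C i ⊆ closedNbr G (vtx i))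
    (hvβ : ∀ i, vtx i ∈ β) (hβ : βᶜ = ⋃ i, A i)
    (hown : ∀ D₀, IsComponentOf G (⋃ i, A i) D₀ → ∃ i, D₀ ⊆ A i)
    (hD : IsComponentOf G (X ∪ (closedNbrSet G (X ∩ range vtx) ∩ β))ᶜ D)
    (hD' : IsComponentOf G (β \ X) D') {u : V} (huD : u ∈ D) (huD' : u ∈ D') :
    D ⊆ D' ∪ ⋃ i ∈ vtx ⁻¹' D', starPart G A i := by
  have hY : ∀ i, vtx i ∈ X →
      closedNbr G (vtx i) ∩ β ⊆ X ∪ (closedNbrSet G (X ∩ range vtx) ∩ β) := fun i hv =>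
    subset_union_of_subset_right (inter_subset_inter_left _
      (closedNbr_subset_closedNbrSet (T := X ∩ range vtx) ⟨hv, i, rfl⟩)) _
  intro x hx
  rcases mem_or_mem_component_with_centres_mem hsep hC hvβ hβ hown subset_union_left hY
    hD.connected hD.subset hD' huD huD' x hx with hxD' | ⟨D₀, hD₀, hxD₀, hcentres⟩
  · exact Or.inl hxD'
  · obtain ⟨j, hj⟩ := hown D₀ hD₀
    obtain ⟨i, hi, hiA⟩ := exists_subset_starPart hD₀ hj
    exact Or.inr (mem_biUnion (hcentres i hi) (hiA hxD₀))

end CentralBag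

theorem stmt13_general {V : Type} [Fintype V] (G : SimpleGraph V)
    (w : V → ℝ) (hw : ∀ v, 0 ≤ w v ∧ w v ≤ 1)
    (c : ℝ) (hc : 1/2 ≤ c ∧ c < 1)
    (k : ℕ) (vtx : Fin k → V) (hinj : Function.Injective vtx)
    (A C B : Fin k → Set V)
    (hsep : ∀ i, IsSeparation G (A i) (C i) (B i))
    -- smoothness
    (hnc : ∀ i j, i ≠ j → ∀ D, IsComponentOf G (A i ∪ A j) D →
      IsComponentOf G (A i) D ∨ IsComponentOf G (A j) D)
    (hCi : ∀ i, vtx i ∈ C i ∧ C i ⊆ closedNbr G (vtx i))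
    (hvA : ∀ i j, vtx i ∉ A j)
    -- each vtx i is unbalanced and B i is the largest-weight component of G \ N[vtx i]
    (hAsmall : ∀ i, fweight w (A i) ≤ 1/2)
    -- the central bag and the inherited weight function
    (β : Set V) (hβ : β = ⋂ i, (B i ∪ C i))
    (Astar : Fin k → Set V)
    (hAstar : ∀ i, Astar i = ⋃₀ {D | IsComponentOf G (⋃ j, A j) D ∧ D ⊆ A i ∧
      ∀ j, j < i → ¬ D ⊆ A j})
    (wS : V → ℝ)
    (hwS1 : ∀ i, wS (vtx i) = w (vtx i) + fweight w (Astar i))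
    (hwS2 : ∀ u, u ∉ Set.range vtx → wS u = w u)
    -- X is a balanced separator of the central bag
    (X : Set V) (hX : X ⊆ β)
    (hXsep : ∀ D, IsComponentOf G (β \ X) D → fweight wS D ≤ c) :
    ∀ D, IsComponentOf G ((X ∪ (closedNbrSet G (X ∩ Set.range vtx) ∩ β))ᶜ) D →
      fweight w D ≤ c := by
  obtain rfl : Astar = starPart G A := funext hAstar
  have hw₀ : ∀ v, 0 ≤ w v := fun v => (hw v).1
  have hβU : βᶜ = ⋃ i, A i := hβ ▸ compl_iInter_union_eq_iUnion hsep
  have hown : ∀ D₀, IsComponentOf G (⋃ i, A i) D₀ → ∃ i, D₀ ⊆ A i :=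
    fun _ => PairwiseNearlyNonCrossing.exists_subset_of_isComponentOf hnc
  have hvβ : ∀ i, vtx i ∈ β := fun i => by
    by_contra h
    rw [← mem_compl_iff, hβU, mem_iUnion] at h
    obtain ⟨j, hj⟩ := h
    exact hvA i j hj
  intro D hD
  rcases (D ∩ β).eq_empty_or_nonempty with hDβ | ⟨u, huD, huβ⟩
  · have hDU : D ⊆ ⋃ i, A i := fun x hx => hβU ▸ fun hxβ => hDβ.subset ⟨hx, hxβ⟩
    have hUY : ⋃ i, A i ⊆ (X ∪ (closedNbrSet G (X ∩ range vtx) ∩ β))ᶜ :=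
      hβU ▸ compl_subset_compl.mpr (union_subset hX inter_subset_right)
    obtain ⟨i, hi⟩ := hown D (hD.of_subset hDU hUY)
    linarith [fweight_mono hw₀ hi, hAsmall i]
  obtain ⟨D', hD', huD'⟩ := exists_isComponentOf_mem (G := G) (S := β \ X)
    ⟨huβ, fun h => hD.subset huD (Or.inl h)⟩
  have hcover := subset_union_biUnion_starPart hsep (fun i => (hCi i).2) hvβ hβU hown hD hD'
    huD huD'
  calc fweight w D
      ≤ fweight w D' + ∑ᶠ i ∈ vtx ⁻¹' D', fweight w (starPart G A i) :=
        (fweight_mono hw₀ hcover).trans <| (fweight_union_le hw₀).trans <|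
          add_le_add le_rfl (fweight_biUnion_le hw₀ _ (toFinite _))
    _ = fweight wS D' := (fweight_eq_add_finsum_preimage hinj _ hwS1 hwS2 D').symm
    _ ≤ c := hXsep D' hD'

/-- a balanced separator of the central bag of a smooth collection of
(canonical-type) star separations extends to a balanced separator of G. -/
theorem stmt13 {V : Type} [Fintype V] (G : SimpleGraph V)
    (hC4 : HFree G (SimpleGraph.cycleGraph 4)) (hdia : HFree G diamond)
    (hcc : ¬ HasCliqueCutset G)
    (w : V → ℝ) (hw : ∀ v, 0 ≤ w v ∧ w v ≤ 1) (hwt : fweight w Set.univ = 1)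
    (c : ℝ) (hc : 1/2 ≤ c ∧ c < 1)
    (k : ℕ) (vtx : Fin k → V) (hinj : Function.Injective vtx)
    (A C B : Fin k → Set V)
    (hsep : ∀ i, IsSeparation G (A i) (C i) (B i))
    -- smoothness
    (hnc : ∀ i j, i ≠ j → ∀ D, IsComponentOf G (A i ∪ A j) D →
      IsComponentOf G (A i) D ∨ IsComponentOf G (A j) D)
    (hCi : ∀ i, vtx i ∈ C i ∧ C i ⊆ closedNbr G (vtx i))
    (hvA : ∀ i j, vtx i ∉ A j)
    -- each vtx i is unbalanced and B i is the largest-weight component of G \ N[vtx i]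
    (hBcomp : ∀ i, IsComponentOf G ((closedNbr G (vtx i))ᶜ) (B i) ∧
      1/2 < fweight w (B i))
    (hAsmall : ∀ i, fweight w (A i) ≤ 1/2)
    -- the central bag and the inherited weight function
    (β : Set V) (hβ : β = ⋂ i, (B i ∪ C i))
    (Astar : Fin k → Set V)
    (hAstar : ∀ i, Astar i = ⋃₀ {D | IsComponentOf G (⋃ j, A j) D ∧ D ⊆ A i ∧
      ∀ j, j < i → ¬ D ⊆ A j})
    (wS : V → ℝ)
    (hwS1 : ∀ i, wS (vtx i) = w (vtx i) + fweight w (Astar i))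
    (hwS2 : ∀ u, u ∉ Set.range vtx → wS u = w u)
    -- X is a balanced separator of the central bag
    (X : Set V) (hX : X ⊆ β)
    (hXsep : ∀ D, IsComponentOf G (β \ X) D → fweight wS D ≤ c) :
    ∀ D, IsComponentOf G ((X ∪ (closedNbrSet G (X ∩ Set.range vtx) ∩ β))ᶜ) D →
      fweight w D ≤ c :=
  stmt13_general G w hw c hc k vtx hinj A C B hsep hnc hCi hvA hAsmall β hβ Astar hAstar wS hwS1
    hwS2 X hX hXsep

end Paper
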